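/- Let X be an abstract simplicial complex on a finite vertex set V with h(X) = d and vertex weight function ω. Then for every −1 ≤ k ≤ dim(X), λ_1^↑(L_k^ω(X)) ≥ (d+1)·min_{σ∈X(k)} Σ_{v∈σ} ω(v) − d·Σ_{v∈V} ω(v). -/

import Mathlib

open Finset

/-- An abstract simplicial complex on the vertex type `V`: a collection of finite subsets of `V`
closed under taking subsets and containing the empty set. -/
structure AbstractSC (V : Type*) where
  faces : Finset (Finset V)
  empty_mem : ∅ ∈ faces
  down_closed : ∀ ⦃σ τ : Finset V⦄, σ ∈ faces → τ ⊆ σ → τ ∈ faces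

variable {V : Type*} [Fintype V] [LinearOrder V]

namespace AbstractSC

/-- The link of a face `σ`: the vertices `v ∉ σ` with `σ ∪ {v}` a face. -/
def link (X : AbstractSC V) (σ : Finset V) : Finset V :=
  univ.filter fun v => v ∉ σ ∧ insert v σ ∈ X.faces

/-- The dimension of the complex (as an integer, so that `dim {∅} = -1`). -/
def dimension (X : AbstractSC V) : ℤ :=
  ((X.faces.sup Finset.card : ℕ) : ℤ) - 1

/-- The faces of cardinality `s`, i.e. the `(s-1)`-simplices. -/
def facesOfCard (X : AbstractSC V) (s : ℕ) : Finset (Finset V) :=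
  X.faces.filter fun σ => σ.card = s

/-- The type of faces of cardinality `s` (the `(s-1)`-simplices). -/
abbrev Face (X : AbstractSC V) (s : ℕ) := {σ : Finset V // σ ∈ X.faces ∧ σ.card = s}

/-- `h(X)`: the maximal dimension of a missing face (a non-face all of whose proper
subsets are faces), as an integer. -/
def hdim (X : AbstractSC V) : ℤ :=
  (((univ.powerset.filter fun σ : Finset V =>
      σ ∉ X.faces ∧ ∀ τ : Finset V, τ ⊂ σ → τ ∈ X.faces).sup Finset.card : ℕ) : ℤ) - 1

end AbstractSC

/-- The sign `(-1)^{ε(σ,τ)}`, where `ε(σ,τ)` is the number of elements of `σ ∩ τ` lying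
strictly between the unique element of `σ \ τ` and the unique element of `τ \ σ`. -/
def epsSign (σ τ : Finset V) : ℝ :=
  if h : (σ \ τ).Nonempty ∧ (τ \ σ).Nonempty then
    (-1 : ℝ) ^ ((σ ∩ τ).filter fun w =>
        min ((σ \ τ).min' h.1) ((τ \ σ).min' h.2) < w ∧
          w < max ((σ \ τ).min' h.1) ((τ \ σ).min' h.2)).card
  else 1

/-- The vertex-weighted `(s-1)`-dimensional Laplacian `L_{s-1}^ω(X)`, as a matrix indexed by
the faces of cardinality `s`. -/
noncomputable def lapFull (X : AbstractSC V) (ω : V → ℝ) (s : ℕ) :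
    Matrix (X.Face s) (X.Face s) ℝ := fun σ τ =>
  if σ = τ then (∑ v ∈ X.link σ.1, ω v) + ∑ v ∈ σ.1, ω v
  else if (σ.1 ∩ τ.1).card + 1 = s ∧ σ.1 ∪ τ.1 ∉ X.faces then
    epsSign σ.1 τ.1 * ∏ v ∈ τ.1 \ σ.1, ω v
  else 0

/-- The vertex-weighted `k`-dimensional Laplacian, for an integer `k ≥ -1`. -/
noncomputable def lapZ (X : AbstractSC V) (ω : V → ℝ) (k : ℤ) :
    Matrix (X.Face (k + 1).toNat) (X.Face (k + 1).toNat) ℝ :=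
  lapFull X ω (k + 1).toNat

/-- The vertex-weighted `(s-1)`-dimensional down-Laplacian `L_{s-1}^{ω,down}(X)`. -/
noncomputable def lapDown (X : AbstractSC V) (ω : V → ℝ) (s : ℕ) :
    Matrix (X.Face s) (X.Face s) ℝ := fun σ τ =>
  if σ = τ then ∑ v ∈ σ.1, ω v
  else if (σ.1 ∩ τ.1).card + 1 = s then epsSign σ.1 τ.1 * ∏ v ∈ τ.1 \ σ.1, ω v
  else 0

/-- The vertex-weighted `(s-1)`-dimensional up-Laplacian of a collection `F` of faces,
as a matrix indexed by all `s`-element subsets of `V`. -/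
noncomputable def lapUpF (F : Finset (Finset V)) (ω : V → ℝ) (s : ℕ) :
    Matrix {σ : Finset V // σ.card = s} {σ : Finset V // σ.card = s} ℝ := fun σ τ =>
  if σ = τ then
    (if σ.1 ∈ F then ∑ u ∈ univ.filter (fun v => v ∉ σ.1 ∧ insert v σ.1 ∈ F), ω u else 0)
  else if (σ.1 ∩ τ.1).card + 1 = s ∧ σ.1 ∪ τ.1 ∈ F then
    -(epsSign σ.1 τ.1 * ∏ v ∈ τ.1 \ σ.1, ω v)
  else 0

/-- The faces of the complex `X_{s-1}^c`, generated by the `s`-element subsets of `V`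
that are not faces of `X`. -/
def complFaces (X : AbstractSC V) (s : ℕ) : Finset (Finset V) :=
  univ.powerset.filter fun τ => ∃ σ : Finset V, σ.card = s ∧ σ ∉ X.faces ∧ τ ⊆ σ

/-- The faces of the `(s-1)`-skeleton of the complete simplicial complex on `V`:
all subsets of cardinality at most `s`. -/
def skeletonFaces (V : Type*) [Fintype V] [DecidableEq V] (s : ℕ) : Finset (Finset V) :=
  univ.powerset.filter fun σ : Finset V => σ.card ≤ s

/-- The vertex-weighted Laplacian `L^ω(G_X)` of the underlying graph of `X`. -/
noncomputable def graphLap (X : AbstractSC V) (ω : V → ℝ) : Matrix V V ℝ := fun u v =>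
  if u = v then ∑ w ∈ univ.filter (fun w => w ≠ u ∧ ({u, w} : Finset V) ∈ X.faces), ω w
  else if ({u, v} : Finset V) ∈ X.faces then -ω v
  else 0

/-- The matrix `J^ω`, with `(u,v)` entry `ω v`. -/
noncomputable def Jmat (ω : V → ℝ) : Matrix V V ℝ := fun _ v => ω v

/-- `N_σ(u)`: the codimension-one faces `η` of `σ` with `η ∪ {u} ∈ X`. -/
def Nset (X : AbstractSC V) (σ : Finset V) (u : V) : Finset (Finset V) :=
  (σ.powersetCard (σ.card - 1)).filter fun η => insert u η ∈ X.faces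

/-- `σ[j]`: the vertices `u` lying in the link of every vertex of `σ` but not in the link of
`σ`, with `|N_σ(u)| = j`. -/
def bracket (X : AbstractSC V) (σ : Finset V) (j : ℕ) : Finset V :=
  univ.filter fun u =>
    (∀ v ∈ σ, u ≠ v ∧ ({v, u} : Finset V) ∈ X.faces) ∧
      insert u σ ∉ X.faces ∧ (Nset X σ u).card = j

/-- The multiset of eigenvalues (with multiplicity) of a real square matrix:
the roots of its characteristic polynomial. -/
noncomputable def spec {m : Type*} [Fintype m] [DecidableEq m] (M : Matrix m m ℝ) :
    Multiset ℝ :=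
  M.charpoly.roots

/-- The `i`-th smallest eigenvalue (1-indexed, with multiplicity). -/
noncomputable def eigAsc {m : Type*} [Fintype m] [DecidableEq m] (M : Matrix m m ℝ)
    (i : ℕ) : ℝ :=
  ((spec M).sort (· ≤ ·)).getD (i - 1) 0

/-- The `i`-th largest eigenvalue (1-indexed, with multiplicity). -/
noncomputable def eigDesc {m : Type*} [Fintype m] [DecidableEq m] (M : Matrix m m ℝ)
    (i : ℕ) : ℝ :=
  ((spec M).sort (· ≤ ·)).getD ((spec M).card - i) 0

/-- `S^↑_{c,i}(M)`: the `i`-th smallest element (1-indexed) of the multiset of all sums of `c`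
of the eigenvalues of `M` (over `c`-element subsets of the index set of the eigenvalues,
listed in increasing order). -/
noncomputable def sumsAsc {m : Type*} [Fintype m] [DecidableEq m] (M : Matrix m m ℝ)
    (c i : ℕ) : ℝ :=
  ((((Finset.range (spec M).card).powersetCard c).val.map
      fun J => ∑ j ∈ J, ((spec M).sort (· ≤ ·)).getD j 0).sort (· ≤ ·)).getD (i - 1) 0

/-- Minimum of a real-valued function over a finite set (junk value `0` on `∅`). -/
noncomputable def minOver {α : Type*} (s : Finset α) (f : α → ℝ) : ℝ :=
  WithTop.untopD 0 ((s.image f).min)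

/-- Maximum of a real-valued function over a finite set (junk value `0` on `∅`). -/
noncomputable def maxOver {α : Type*} (s : Finset α) (f : α → ℝ) : ℝ :=
  WithBot.unbotD 0 ((s.image f).max)

/-- The multiset of all sums `λ_0 + ⋯ + λ_{m-1}` over choices of one element `λ_j` from each
multiset `s j`, counted with multiplicity. -/
noncomputable def multisetSumChoices : (m : ℕ) → (Fin m → Multiset ℝ) → Multiset ℝ
  | 0, _ => {0}
  | m + 1, s => (s 0).bind fun a => (multisetSumChoices m fun j => s j.succ).map (a + ·)


/-! ### Auxiliary lemmas for the proof of `statement9` -/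

section Statement9Aux

open Polynomial Matrix

section LinAlg

variable {n : Type*} [Fintype n] [DecidableEq n]

private lemma my_charpoly_similar (P Q A : Matrix n n ℝ) (hPQ : P * Q = 1) (hQP : Q * P = 1) :
    (P * A * Q).charpoly = A.charpoly := by
  let f : Matrix n n ℝ →+* Matrix n n ℝ[X] := (C : ℝ →+* ℝ[X]).mapMatrix
  have hPQ' : f P * f Q = 1 := by rw [← _root_.map_mul, hPQ, _root_.map_one]
  have hQP' : f Q * f P = 1 := by rw [← _root_.map_mul, hQP, _root_.map_one]
  have hscal : ∀ B : Matrix n n ℝ[X], scalar n (X : ℝ[X]) * B = B * scalar n X := fun B =>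
    (Matrix.scalar_commute (X : ℝ[X]) (fun r => Commute.all _ _) B)
  have key : charmatrix (P * A * Q) = f P * charmatrix A * f Q := by
    rw [charmatrix, charmatrix, _root_.map_mul, _root_.map_mul]
    rw [mul_sub, sub_mul]
    congr 1
    rw [← hscal, mul_assoc, hPQ', mul_one]
  rw [Matrix.charpoly, Matrix.charpoly, key, det_mul, det_mul]
  have : (f P).det * (f Q).det = 1 := by rw [← det_mul, hPQ', det_one]
  calc (f P).det * (charmatrix A).det * (f Q).det
      = (f P).det * (f Q).det * (charmatrix A).det := by ring
    _ = (charmatrix A).det := by rw [this, one_mul]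

private lemma my_charpoly_diagonal (d : n → ℝ) :
    (Matrix.diagonal d).charpoly = ∏ i, (X - C (d i)) := by
  rw [Matrix.charpoly]
  have : charmatrix (Matrix.diagonal d) = Matrix.diagonal fun i => (X : ℝ[X]) - C (d i) := by
    ext i j
    by_cases h : i = j
    · subst h; simp [charmatrix_apply_eq]
    · simp [charmatrix_apply_ne _ _ _ h, Matrix.diagonal_apply_ne _ h]
  rw [this, det_diagonal]

private lemma my_spec_symm (A : Matrix n n ℝ) (hA : A.IsHermitian) :
    A.charpoly.roots = Multiset.map (fun i => hA.eigenvalues i) Finset.univ.val := by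
  have hspec := hA.spectral_theorem
  have hU1 : (hA.eigenvectorUnitary : Matrix n n ℝ) *
      (star hA.eigenvectorUnitary : Matrix n n ℝ) = 1 := by
    simpa using (Matrix.mem_unitaryGroup_iff.mp hA.eigenvectorUnitary.2)
  have hU2 : (star hA.eigenvectorUnitary : Matrix n n ℝ) *
      (hA.eigenvectorUnitary : Matrix n n ℝ) = 1 := by
    simpa using (Matrix.mem_unitaryGroup_iff.mp' hA.eigenvectorUnitary.2)
  have : A.charpoly = (Matrix.diagonal hA.eigenvalues).charpoly := by
    conv_lhs => rw [hspec]
    have : (Matrix.diagonal (RCLike.ofReal ∘ hA.eigenvalues) : Matrix n n ℝ)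
        = Matrix.diagonal hA.eigenvalues := by
      congr 1
    rw [this]
    exact my_charpoly_similar _ _ _ hU1 hU2
  rw [this, my_charpoly_diagonal]
  have := Polynomial.roots_multiset_prod_X_sub_C
    (Multiset.map (fun i => hA.eigenvalues i) Finset.univ.val)
  rw [← this]
  congr 1
  rw [Multiset.map_map]
  rw [Finset.prod_eq_multiset_prod]
  rfl

private lemma my_eig_of_root (A : Matrix n n ℝ) {μ : ℝ} (h : μ ∈ A.charpoly.roots) :
    Module.End.HasEigenvalue (Matrix.toLin' A) μ := by
  have hroot : A.charpoly.IsRoot μ := (Polynomial.mem_roots (A.charpoly_monic.ne_zero)).mp h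
  have hdet : (A - Matrix.scalar n μ).det = 0 := by
    have : A.charpoly.eval μ = ((charmatrix A).map (Polynomial.evalRingHom μ)).det := by
      rw [Matrix.charpoly, ← Polynomial.coe_evalRingHom, RingHom.map_det]
      rfl
    have hmap : (charmatrix A).map (Polynomial.evalRingHom μ) = Matrix.scalar n μ - A := by
      ext i j
      by_cases hij : i = j
      · subst hij; simp [charmatrix_apply_eq, Matrix.scalar_apply]
      · simp [charmatrix_apply_ne _ _ _ hij, Matrix.scalar_apply, Matrix.diagonal_apply_ne _ hij]
    have h0 : (Matrix.scalar n μ - A).det = 0 := by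
      rw [← hmap, ← this]; exact hroot
    rw [show A - Matrix.scalar n μ = -(Matrix.scalar n μ - A) from (neg_sub _ _).symm,
      Matrix.det_neg, h0, mul_zero]
  obtain ⟨v, hv0, hv⟩ := (Matrix.exists_mulVec_eq_zero_iff).mpr hdet
  apply Module.End.hasEigenvalue_of_hasEigenvector (x := v)
  constructor
  · rw [Module.End.mem_eigenspace_iff, Matrix.toLin'_apply]
    have h1 : A *ᵥ v - (Matrix.scalar n μ) *ᵥ v = 0 := by
      rw [← Matrix.sub_mulVec, hv]
    have h2 : (Matrix.scalar n μ) *ᵥ v = μ • v := by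
      ext i; simp [Matrix.mulVec, dotProduct, Matrix.scalar_apply,
        Matrix.diagonal_apply, Finset.sum_ite_eq, Finset.mem_univ]
    rw [h2] at h1
    exact sub_eq_zero.mp h1
  · exact hv0

private lemma my_eigAsc_lb [Nonempty n] (L : Matrix n n ℝ) (p : n → ℝ) (hp : ∀ i, 0 < p i)
    (hsym : ∀ i j, p i ^ 2 * L i j = p j ^ 2 * L j i) (c : ℝ)
    (hc : ∀ i, c ≤ L i i - ∑ j ∈ Finset.univ.erase i, |L i j|) :
    c ≤ eigAsc L 1 := by
  set P : Matrix n n ℝ := Matrix.diagonal p with hP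
  set Q : Matrix n n ℝ := Matrix.diagonal (fun i => (p i)⁻¹) with hQ
  have hPQ : P * Q = 1 := by
    rw [hP, hQ, Matrix.diagonal_mul_diagonal]
    convert Matrix.diagonal_one
    exact mul_inv_cancel₀ (hp _).ne'
  have hQP : Q * P = 1 := by
    rw [hP, hQ, Matrix.diagonal_mul_diagonal]
    convert Matrix.diagonal_one
    exact inv_mul_cancel₀ (hp _).ne'
  have hM : (P * L * Q).IsHermitian := by
    rw [Matrix.IsHermitian]
    ext i j
    simp only [Matrix.conjTranspose_apply, star_trivial]
    rw [hP, hQ, Matrix.mul_diagonal, Matrix.mul_diagonal, Matrix.diagonal_mul,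
      Matrix.diagonal_mul]
    have h1 := hsym i j
    have hpi := (hp i).ne'
    have hpj := (hp j).ne'
    field_simp
    nlinarith [hsym i j]
  have hcp : L.charpoly = (P * L * Q).charpoly := (my_charpoly_similar P Q L hPQ hQP).symm
  have hcard : (spec L).card = Fintype.card n := by
    rw [spec, hcp, my_spec_symm _ hM, Multiset.card_map]
    rfl
  have hne : ((spec L).sort (· ≤ ·)) ≠ [] := by
    intro h
    have := Multiset.length_sort (α := ℝ) (· ≤ ·) (s := spec L)
    rw [h] at this
    simp only [List.length_nil] at this
    have := Fintype.card_pos (α := n)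
    omega
  obtain ⟨μ, l, hl⟩ := List.exists_cons_of_ne_nil hne
  have heig : eigAsc L 1 = μ := by rw [eigAsc, hl]; rfl
  have hmem : μ ∈ spec L := by
    rw [← Multiset.mem_sort (· ≤ ·), hl]; exact List.mem_cons_self
  obtain ⟨i, hball⟩ := eigenvalue_mem_ball (my_eig_of_root L hmem)
  rw [Metric.mem_closedBall, Real.dist_eq] at hball
  have h1 : L i i - ∑ j ∈ Finset.univ.erase i, ‖L i j‖ ≤ μ := by
    have := abs_sub_abs_le_abs_sub μ (L i i)
    have h2 := neg_abs_le (μ - L i i)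
    simp only [Real.norm_eq_abs] at hball ⊢
    linarith [abs_nonneg μ]
  calc c ≤ L i i - ∑ j ∈ Finset.univ.erase i, |L i j| := hc i
    _ ≤ μ := by simpa [Real.norm_eq_abs] using h1
    _ = eigAsc L 1 := heig.symm

end LinAlg

private lemma my_abs_epsSign (σ τ : Finset V) : |epsSign σ τ| = 1 := by
  unfold epsSign
  split_ifs with h
  · rw [abs_pow, abs_neg, abs_one, one_pow]
  · exact abs_one

private lemma my_epsSign_comm (σ τ : Finset V) : epsSign σ τ = epsSign τ σ := by
  unfold epsSign
  by_cases h : (σ \ τ).Nonempty ∧ (τ \ σ).Nonempty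
  · rw [dif_pos h, dif_pos ⟨h.2, h.1⟩]
    congr 2
    rw [inter_comm]
    apply Finset.filter_congr
    intro w _
    rw [min_comm, max_comm]
  · rw [dif_neg h, dif_neg (fun hh => h ⟨hh.2, hh.1⟩)]

private lemma my_minOver_le {α : Type*} (s : Finset α) (f : α → ℝ) {a : α} (ha : a ∈ s) :
    minOver s f ≤ f a := by
  rw [minOver]
  obtain ⟨b, hb⟩ := Finset.min_of_mem (Finset.mem_image_of_mem f ha)
  have hle : (s.image f).min ≤ (f a : WithTop ℝ) :=
    Finset.min_le (Finset.mem_image_of_mem f ha)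
  rw [hb] at hle ⊢
  exact_mod_cast hle

set_option maxHeartbeats 1000000 in
/-- Gershgorin row estimate for the weighted Laplacian, under the assumption that every
minimal non-face has cardinality at most `d + 1`. -/
private lemma my_key_row_bound (X : AbstractSC V) (ω : V → ℝ) (hω : ∀ v, 0 < ω v) (d : ℕ)
    (hmiss : ∀ ρ : Finset V, ρ ∉ X.faces → (∀ τ ⊂ ρ, τ ∈ X.faces) → ρ.card ≤ d + 1)
    (s : ℕ) (σ : X.Face s) :
    ((d : ℝ) + 1) * (∑ v ∈ σ.1, ω v) - (d : ℝ) * ∑ v, ω v ≤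
      lapFull X ω s σ σ - ∑ τ ∈ univ.erase σ, |lapFull X ω s σ τ| := by
  classical
  set B : Finset V := univ.filter (fun v => v ∉ σ.1 ∧ insert v σ.1 ∉ X.faces) with hB
  have hdiag : lapFull X ω s σ σ = (∑ v ∈ X.link σ.1, ω v) + ∑ v ∈ σ.1, ω v := if_pos rfl
  have hρ : ∀ v : V, ∃ ρ : Finset V, v ∈ B →
      ρ ⊆ insert v σ.1 ∧ ρ ∉ X.faces ∧ v ∈ ρ ∧ ρ.card ≤ d + 1 := by
    intro v
    by_cases hv : v ∈ B
    · simp only [hB, mem_filter, mem_univ, true_and] at hv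
      have hSne : ((insert v σ.1).powerset.filter (· ∉ X.faces)).Nonempty :=
        ⟨insert v σ.1, by simp [hv.2]⟩
      obtain ⟨ρ, hρmem, hρmin⟩ := Finset.exists_min_image _ Finset.card hSne
      simp only [mem_filter, mem_powerset] at hρmem
      refine ⟨ρ, fun _ => ⟨hρmem.1, hρmem.2, ?_, ?_⟩⟩
      · by_contra hvρ
        exact hρmem.2 (X.down_closed σ.2.1 (fun x hx => by
          have := hρmem.1 hx
          rcases Finset.mem_insert.mp this with h | h
          · exact absurd (h ▸ hx) hvρ
          · exact h))
      · refine hmiss ρ hρmem.2 ?_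
        intro τ hτ
        by_contra hτf
        have hτmem : τ ∈ (insert v σ.1).powerset.filter (· ∉ X.faces) := by
          simp only [mem_filter, mem_powerset]
          exact ⟨hτ.subset.trans hρmem.1, hτf⟩
        have := hρmin τ hτmem
        have := Finset.card_lt_card hτ
        omega
    · exact ⟨∅, fun h => absurd h hv⟩
  choose ρ hρ using hρ
  set P : X.Face s → Prop := fun τ => (σ.1 ∩ τ.1).card + 1 = s ∧ σ.1 ∪ τ.1 ∉ X.faces with hP
  set T : Finset (X.Face s) := (univ.erase σ).filter P with hT
  have hsum0 : ∑ τ ∈ univ.erase σ, |lapFull X ω s σ τ| = ∑ τ ∈ T, |lapFull X ω s σ τ| := by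
    rw [hT]
    refine (Finset.sum_filter_of_ne ?_).symm
    intro τ hτ hne
    rw [lapFull] at hne
    rw [if_neg (fun h => (Finset.mem_erase.mp hτ).1 h.symm)] at hne
    by_contra hc
    rw [if_neg hc] at hne
    exact hne abs_zero
  have hoff : ∑ τ ∈ T, |lapFull X ω s σ τ| ≤ ∑ v ∈ B, (d : ℝ) * ω v := by
    rcases T.eq_empty_or_nonempty with hTe | hTne
    · rw [hTe, Finset.sum_empty]
      exact Finset.sum_nonneg fun v _ => mul_nonneg (Nat.cast_nonneg d) (hω v).le
    · obtain ⟨τ₀, hτ₀⟩ := hTne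
      have hstruct : ∀ τ ∈ T, ∃ v u : V, τ.1 \ σ.1 = {v} ∧ σ.1 \ τ.1 = {u} ∧
          v ∈ B ∧ u ∈ (ρ v).erase v ∧ τ.1 = (insert v σ.1).erase u := by
        intro τ hτ
        rw [hT, Finset.mem_filter, Finset.mem_erase] at hτ
        obtain ⟨⟨hτσ, -⟩, hcard, hunion⟩ := hτ
        have h1 : (τ.1 \ σ.1).card + (τ.1 ∩ σ.1).card = τ.1.card :=
          Finset.card_sdiff_add_card_inter _ _
        have h2 : (σ.1 \ τ.1).card + (σ.1 ∩ τ.1).card = σ.1.card :=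
          Finset.card_sdiff_add_card_inter _ _
        rw [Finset.inter_comm] at h1
        have hτc : τ.1.card = s := τ.2.2
        have hσc : σ.1.card = s := σ.2.2
        have hv1 : (τ.1 \ σ.1).card = 1 := by omega
        have hu1 : (σ.1 \ τ.1).card = 1 := by omega
        obtain ⟨v, hv⟩ := Finset.card_eq_one.mp hv1
        obtain ⟨u, hu⟩ := Finset.card_eq_one.mp hu1
        have hvτ : v ∈ τ.1 ∧ v ∉ σ.1 := by
          have : v ∈ τ.1 \ σ.1 := hv ▸ Finset.mem_singleton_self v
          exact ⟨(Finset.mem_sdiff.mp this).1, (Finset.mem_sdiff.mp this).2⟩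
        have huσ : u ∈ σ.1 ∧ u ∉ τ.1 := by
          have : u ∈ σ.1 \ τ.1 := hu ▸ Finset.mem_singleton_self u
          exact ⟨(Finset.mem_sdiff.mp this).1, (Finset.mem_sdiff.mp this).2⟩
        have hins : insert v σ.1 = σ.1 ∪ τ.1 := by
          apply Finset.Subset.antisymm
          · intro x hx
            rcases Finset.mem_insert.mp hx with h | h
            · exact Finset.mem_union_right _ (h ▸ hvτ.1)
            · exact Finset.mem_union_left _ h
          · intro x hx
            rcases Finset.mem_union.mp hx with h | h
            · exact Finset.mem_insert_of_mem h
            · by_cases hxσ : x ∈ σ.1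
              · exact Finset.mem_insert_of_mem hxσ
              · have : x ∈ τ.1 \ σ.1 := Finset.mem_sdiff.mpr ⟨h, hxσ⟩
                rw [hv, Finset.mem_singleton] at this
                exact this ▸ Finset.mem_insert_self _ _
        have hvB : v ∈ B := by
          rw [hB, Finset.mem_filter]
          exact ⟨Finset.mem_univ _, hvτ.2, by rw [hins]; exact hunion⟩
        have hτeq : τ.1 = (insert v σ.1).erase u := by
          apply Finset.Subset.antisymm
          · intro x hx
            rw [Finset.mem_erase, hins]
            exact ⟨fun h => huσ.2 (h ▸ hx), Finset.mem_union_right _ hx⟩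
          · intro x hx
            rw [Finset.mem_erase, hins] at hx
            rcases Finset.mem_union.mp hx.2 with h | h
            · by_contra hxτ
              have : x ∈ σ.1 \ τ.1 := Finset.mem_sdiff.mpr ⟨h, hxτ⟩
              rw [hu, Finset.mem_singleton] at this
              exact hx.1 this
            · exact h
        refine ⟨v, u, hv, hu, hvB, ?_, hτeq⟩
        rw [Finset.mem_erase]
        obtain ⟨hρsub, hρnf, hvρ, hρcard⟩ := hρ v hvB
        constructor
        · intro h; exact hvτ.2 (h ▸ huσ.1)
        · by_contra huρ
          apply hρnf
          apply X.down_closed τ.2.1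
          intro x hx
          have hx' := hρsub hx
          rw [hτeq, Finset.mem_erase]
          exact ⟨fun h => huρ (h ▸ hx), hx'⟩
      obtain ⟨v₀', u₀', hv₀, -⟩ := hstruct τ₀ hτ₀
      set f : Finset V → V := fun A => if h : A.Nonempty then A.min' h else v₀' with hf
      set e : X.Face s → V × V := fun τ => (f (τ.1 \ σ.1), f (σ.1 \ τ.1)) with he
      have hfs : ∀ v : V, f {v} = v := fun v => by
        rw [hf]
        simp only [Finset.singleton_nonempty, dif_pos]
        exact Finset.min'_singleton v
      set E : Finset (V × V) :=
        B.biUnion (fun v => ((ρ v).erase v).image (fun u => (v, u))) with hE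
      have hmaps : ∀ τ ∈ T, e τ ∈ E := by
        intro τ hτ
        obtain ⟨v, u, hv, hu, hvB, huρ, -⟩ := hstruct τ hτ
        rw [hE, Finset.mem_biUnion]
        exact ⟨v, hvB, Finset.mem_image.mpr ⟨u, huρ, by rw [he]; simp only; rw [hv, hu, hfs, hfs]⟩⟩
      have hinj : Set.InjOn e T := by
        intro τ1 h1 τ2 h2 heq
        obtain ⟨v1, u1, hv1, hu1, -, -, hτ1⟩ := hstruct τ1 h1
        obtain ⟨v2, u2, hv2, hu2, -, -, hτ2⟩ := hstruct τ2 h2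
        have e1 : e τ1 = (v1, u1) := by rw [he]; simp only; rw [hv1, hu1, hfs, hfs]
        have e2 : e τ2 = (v2, u2) := by rw [he]; simp only; rw [hv2, hu2, hfs, hfs]
        rw [e1, e2, Prod.mk.injEq] at heq
        apply Subtype.ext
        rw [hτ1, hτ2, heq.1, heq.2]
      have hterm : ∀ τ ∈ T, |lapFull X ω s σ τ| = ω (e τ).1 := by
        intro τ hτ
        obtain ⟨v, u, hv, hu, hvB, -, -⟩ := hstruct τ hτ
        have hτT := hτ
        rw [hT, Finset.mem_filter, Finset.mem_erase] at hτT
        have hτσ : σ ≠ τ := fun h => hτT.1.1 h.symm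
        rw [lapFull, if_neg hτσ, if_pos hτT.2]
        rw [hv, Finset.prod_singleton, abs_mul, my_abs_epsSign, one_mul,
          abs_of_pos (hω v)]
        have : (e τ).1 = v := by rw [he]; simp only; rw [hv, hfs]
        rw [this]
      calc ∑ τ ∈ T, |lapFull X ω s σ τ| = ∑ τ ∈ T, ω (e τ).1 :=
            Finset.sum_congr rfl hterm
        _ = ∑ p ∈ T.image e, ω p.1 := by
            rw [Finset.sum_image fun x hx y hy h => hinj hx hy h]
        _ ≤ ∑ p ∈ E, ω p.1 := by
            apply Finset.sum_le_sum_of_subset_of_nonneg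
            · intro p hp
              obtain ⟨τ, hτ, rfl⟩ := Finset.mem_image.mp hp
              exact hmaps τ hτ
            · exact fun p _ _ => (hω p.1).le
        _ = ∑ v ∈ B, ∑ p ∈ ((ρ v).erase v).image (fun u => (v, u)), ω p.1 := by
            rw [hE]
            apply Finset.sum_biUnion
            intro v1 h1 v2 h2 hne
            apply Finset.disjoint_left.mpr
            intro p hp1 hp2
            obtain ⟨a, -, rfl⟩ := Finset.mem_image.mp hp1
            obtain ⟨b, -, hb⟩ := Finset.mem_image.mp hp2
            exact hne (congrArg Prod.fst hb).symm
        _ ≤ ∑ v ∈ B, (d : ℝ) * ω v := by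
            apply Finset.sum_le_sum
            intro v hvB
            rw [Finset.sum_image (fun a _ b _ h => (Prod.mk.injEq _ _ _ _).mp h |>.2)]
            simp only [Finset.sum_const, nsmul_eq_mul]
            apply mul_le_mul_of_nonneg_right _ (hω v).le
            have := (hρ v hvB).2.2
            have hcard := Finset.card_erase_of_mem this.1
            rw [hcard]
            have h2 := this.2
            have h3 : ((ρ v).card - 1 : ℕ) ≤ d := by omega
            exact_mod_cast h3
  have hpart : ∑ v, ω v = (∑ v ∈ σ.1, ω v) + (∑ v ∈ X.link σ.1, ω v) + ∑ v ∈ B, ω v := by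
    rw [← Finset.sum_union, ← Finset.sum_union]
    · apply Finset.sum_congr _ (fun _ _ => rfl)
      ext v
      simp only [Finset.mem_univ, true_iff, Finset.mem_union, AbstractSC.link, hB,
        Finset.mem_filter, Finset.mem_univ, true_and]
      by_cases h1 : v ∈ σ.1 <;> by_cases h2 : insert v σ.1 ∈ X.faces <;> tauto
    · apply Finset.disjoint_left.mpr
      intro v hv1 hv2
      rcases Finset.mem_union.mp hv1 with h | h
      · exact ((Finset.mem_filter.mp hv2).2.1 h).elim
      · exact (Finset.mem_filter.mp hv2).2.2 (Finset.mem_filter.mp h).2.2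
    · apply Finset.disjoint_left.mpr
      intro v hv1 hv2
      exact (Finset.mem_filter.mp hv2).2.1 hv1
  have hlinknn : 0 ≤ ∑ v ∈ X.link σ.1, ω v := Finset.sum_nonneg fun v _ => (hω v).le
  have hBd : ∑ v ∈ B, (d : ℝ) * ω v = (d : ℝ) * ∑ v ∈ B, ω v := by
    rw [Finset.mul_sum]
  have hdnn : (0 : ℝ) ≤ d := Nat.cast_nonneg d
  rw [hdiag, hsum0]
  have hBnn : 0 ≤ ∑ v ∈ B, ω v := Finset.sum_nonneg fun v _ => (hω v).le
  nlinarith [hoff, hpart, hlinknn, hBd, hdnn, hBnn]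

private lemma my_lap_weight_sym (X : AbstractSC V) (ω : V → ℝ) (s : ℕ) (σ τ : X.Face s) :
    (∏ v ∈ σ.1, ω v) * lapFull X ω s σ τ = (∏ v ∈ τ.1, ω v) * lapFull X ω s τ σ := by
  by_cases h : σ = τ
  · rw [h]
  · have h' : ¬(τ = σ) := fun hh => h hh.symm
    simp only [lapFull]
    rw [if_neg h, if_neg h']
    by_cases hc : (σ.1 ∩ τ.1).card + 1 = s ∧ σ.1 ∪ τ.1 ∉ X.faces
    · have hc' : (τ.1 ∩ σ.1).card + 1 = s ∧ τ.1 ∪ σ.1 ∉ X.faces := by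
        rwa [Finset.inter_comm, Finset.union_comm] at hc
      rw [if_pos hc, if_pos hc']
      rw [my_epsSign_comm τ.1 σ.1]
      have key : (∏ v ∈ σ.1, ω v) * ∏ v ∈ τ.1 \ σ.1, ω v
          = (∏ v ∈ τ.1, ω v) * ∏ v ∈ σ.1 \ τ.1, ω v := by
        rw [← Finset.prod_union (Finset.disjoint_sdiff), ← Finset.prod_union
          (Finset.disjoint_sdiff), Finset.union_sdiff_self_eq_union,
          Finset.union_sdiff_self_eq_union, Finset.union_comm]
      calc (∏ v ∈ σ.1, ω v) * (epsSign σ.1 τ.1 * ∏ v ∈ τ.1 \ σ.1, ω v)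
          = epsSign σ.1 τ.1 * ((∏ v ∈ σ.1, ω v) * ∏ v ∈ τ.1 \ σ.1, ω v) := by ring
        _ = epsSign σ.1 τ.1 * ((∏ v ∈ τ.1, ω v) * ∏ v ∈ σ.1 \ τ.1, ω v) := by rw [key]
        _ = (∏ v ∈ τ.1, ω v) * (epsSign σ.1 τ.1 * ∏ v ∈ σ.1 \ τ.1, ω v) := by ring
    · have hc' : ¬((τ.1 ∩ σ.1).card + 1 = s ∧ τ.1 ∪ σ.1 ∉ X.faces) := by
        rw [Finset.inter_comm, Finset.union_comm]; exact hc
      rw [if_neg hc, if_neg hc', mul_zero, mul_zero]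

end Statement9Aux

/-- Weaker lower bound for the vertex-weighted spectral gap:
`λ_1^↑(L_k^ω(X)) ≥ (d+1)·min_{σ∈X(k)} Σ_{v∈σ} ω(v) - d·Σ_{v∈V} ω(v)`, where `d = h(X)`. -/
theorem statement9 {V : Type*} [Fintype V] [LinearOrder V]
    (X : AbstractSC V) (ω : V → ℝ) (hω : ∀ v, 0 < ω v)
    (hvert : ∀ v : V, ({v} : Finset V) ∈ X.faces)
    (d : ℕ) (hd : X.hdim = (d : ℤ))
    (k : ℤ) (hk : -1 ≤ k) (hk' : k ≤ X.dimension) :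
    ((d : ℝ) + 1) * minOver (X.facesOfCard (k + 1).toNat) (fun σ => ∑ v ∈ σ, ω v) -
        (d : ℝ) * ∑ v, ω v ≤
      eigAsc (lapZ X ω k) 1 := by
  classical
  set s : ℕ := (k + 1).toNat with hs
  -- the complex has a face of cardinality `s`
  have hface : ∃ σ0 : Finset V, σ0 ∈ X.faces ∧ σ0.card = s := by
    have hsup : s ≤ X.faces.sup Finset.card := by
      rw [AbstractSC.dimension] at hk'
      omega
    obtain ⟨τ, hτ, hτc⟩ := Finset.exists_mem_eq_sup X.faces ⟨∅, X.empty_mem⟩ Finset.card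
    obtain ⟨σ0, hsub, hcard⟩ := Finset.exists_subset_card_eq (show s ≤ τ.card by omega)
    exact ⟨σ0, X.down_closed hτ hsub, hcard⟩
  obtain ⟨σ0, hσ0f, hσ0c⟩ := hface
  have hne : Nonempty (X.Face s) := ⟨⟨σ0, hσ0f, hσ0c⟩⟩
  -- every missing face has at most `d + 1` vertices
  have hmiss : ∀ ρ : Finset V, ρ ∉ X.faces → (∀ τ ⊂ ρ, τ ∈ X.faces) → ρ.card ≤ d + 1 := by
    intro ρ h1 h2
    have hmem : ρ ∈ univ.powerset.filter fun σ : Finset V =>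
        σ ∉ X.faces ∧ ∀ τ : Finset V, τ ⊂ σ → τ ∈ X.faces :=
      Finset.mem_filter.mpr ⟨Finset.mem_powerset.mpr (Finset.subset_univ ρ), h1, h2⟩
    have := Finset.le_sup (f := Finset.card) hmem
    rw [AbstractSC.hdim] at hd
    omega
  -- apply the symmetrized Gershgorin bound
  have hL : lapZ X ω k = lapFull X ω s := rfl
  rw [hL]
  apply my_eigAsc_lb (lapFull X ω s) (fun σ => Real.sqrt (∏ v ∈ σ.1, ω v))
  · intro i
    exact Real.sqrt_pos.mpr (Finset.prod_pos fun v _ => hω v)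
  · intro i j
    rw [Real.sq_sqrt (Finset.prod_nonneg fun v _ => (hω v).le),
      Real.sq_sqrt (Finset.prod_nonneg fun v _ => (hω v).le)]
    exact my_lap_weight_sym X ω s i j
  · intro i
    have h1 := my_key_row_bound X ω hω d hmiss s i
    have h2 : minOver (X.facesOfCard s) (fun σ => ∑ v ∈ σ, ω v) ≤ ∑ v ∈ i.1, ω v :=
      my_minOver_le _ _ (Finset.mem_filter.mpr ⟨i.2.1, i.2.2⟩)
    have h3 : ((d : ℝ) + 1) * minOver (X.facesOfCard s) (fun σ => ∑ v ∈ σ, ω v)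
        ≤ ((d : ℝ) + 1) * ∑ v ∈ i.1, ω v :=
      mul_le_mul_of_nonneg_left h2 (by positivity)
    linarith
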